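/- arXiv:2403.12792 — 3 statements merged into one kernel-verified Lean document; each statement's English description precedes it below -/
import Mathlib

section
/- Let 0 ∈ R^d lie in the open simplex spanned by a finite set Q ⊂ R^d of points all at distance r from 0 (i.e., 0 is a convex combination with strictly positive coefficients of the points of Q, and ‖q‖ = r for all q ∈ Q). Then for every x ∈ R^d there exists q ∈ Q with ‖x − q‖ ≥ r. Consequently max_{q ∈ Q} ‖x − q‖ attains its minimum over x ∈ R^d at x = 0. -/
/-! Since `0 = ∑ λ_q q` with `∑ λ_q = 1`, the parallel-axis identity gives
`∑ λ_q ‖x - q‖² = ‖x‖² + r² ≥ r²`, so with positive weights some `‖x - q‖` is at least `r`,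
which is the value of `max_{q ∈ Q} ‖0 - q‖`. -/

section WeightedSum

variable {ι E : Type*} [NormedAddCommGroup E] [InnerProductSpace ℝ E]
  {s : Finset ι} {w : ι → ℝ} {p : ι → E}

theorem sum_mul_norm_sub_sq_of_sum_smul_eq_zero (hw : ∑ i ∈ s, w i = 1)
    (hp : ∑ i ∈ s, w i • p i = 0) (x : E) :
    ∑ i ∈ s, w i * ‖x - p i‖ ^ 2 = ‖x‖ ^ 2 + ∑ i ∈ s, w i * ‖p i‖ ^ 2 := by
  have hinner : ∑ i ∈ s, w i * inner ℝ x (p i) = 0 := by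
    simpa only [inner_sum, inner_smul_right, inner_zero_right] using congrArg (inner ℝ x) hp
  calc ∑ i ∈ s, w i * ‖x - p i‖ ^ 2
      = ∑ i ∈ s, (w i * ‖x‖ ^ 2 - 2 * (w i * inner ℝ x (p i)) + w i * ‖p i‖ ^ 2) := by
        refine Finset.sum_congr rfl fun i _ => ?_
        rw [norm_sub_sq_real]
        ring
    _ = (∑ i ∈ s, w i) * ‖x‖ ^ 2 - 2 * ∑ i ∈ s, w i * inner ℝ x (p i)
          + ∑ i ∈ s, w i * ‖p i‖ ^ 2 := by
        rw [Finset.sum_add_distrib, Finset.sum_sub_distrib, ← Finset.sum_mul, ← Finset.mul_sum]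
    _ = ‖x‖ ^ 2 + ∑ i ∈ s, w i * ‖p i‖ ^ 2 := by
        rw [hw, hinner]
        ring

theorem exists_le_norm_sub_of_sum_smul_eq_zero {r : ℝ} (hw_pos : ∀ i ∈ s, 0 < w i)
    (hw : ∑ i ∈ s, w i = 1) (hp : ∑ i ∈ s, w i • p i = 0) (hr : ∀ i ∈ s, ‖p i‖ = r)
    (x : E) : ∃ i ∈ s, r ≤ ‖x - p i‖ := by
  have hs : s.Nonempty := Finset.nonempty_of_sum_ne_zero (hw ▸ one_ne_zero)
  have hmoment : ∑ i ∈ s, w i * r ^ 2 ≤ ∑ i ∈ s, w i * ‖x - p i‖ ^ 2 := by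
    have hsphere : ∑ i ∈ s, w i * ‖p i‖ ^ 2 = ∑ i ∈ s, w i * r ^ 2 :=
      Finset.sum_congr rfl fun i hi => by rw [hr i hi]
    rw [sum_mul_norm_sub_sq_of_sum_smul_eq_zero hw hp x, hsphere]
    exact le_add_of_nonneg_left (sq_nonneg _)
  obtain ⟨i, hi, hle⟩ := Finset.exists_le_of_sum_le hs hmoment
  have hsq : r ^ 2 ≤ ‖x - p i‖ ^ 2 := le_of_mul_le_mul_left hle (hw_pos i hi)
  exact ⟨i, hi, (le_abs_self r).trans (abs_le_of_sq_le_sq hsq (norm_nonneg _))⟩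

end WeightedSum

theorem center_in_open_simplex_min_general {d : ℕ} (Q : Finset (EuclideanSpace ℝ (Fin d)))
    (r : ℝ) (hQ : ∀ q ∈ Q, ‖q‖ = r)
    (lam : EuclideanSpace ℝ (Fin d) → ℝ)
    (hpos : ∀ q ∈ Q, 0 < lam q) (hsum : ∑ q ∈ Q, lam q = 1)
    (hcomb : ∑ q ∈ Q, lam q • q = (0 : EuclideanSpace ℝ (Fin d))) :
    (∀ x : EuclideanSpace ℝ (Fin d), ∃ q ∈ Q, r ≤ ‖x - q‖) ∧
    (∀ x : EuclideanSpace ℝ (Fin d),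
      sSup ((fun q => ‖(0 : EuclideanSpace ℝ (Fin d)) - q‖) '' Q) ≤
        sSup ((fun q => ‖x - q‖) '' Q)) := by
  have hfar : ∀ x : EuclideanSpace ℝ (Fin d), ∃ q ∈ Q, r ≤ ‖x - q‖ :=
    exists_le_norm_sub_of_sum_smul_eq_zero (p := id) hpos hsum hcomb hQ
  refine ⟨hfar, fun x => ?_⟩
  obtain ⟨q, hq, hrq⟩ := hfar x
  calc sSup ((fun q => ‖(0 : EuclideanSpace ℝ (Fin d)) - q‖) '' Q)
      ≤ r := by
        refine csSup_le ⟨_, Set.mem_image_of_mem _ hq⟩ ?_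
        rintro _ ⟨q', hq', rfl⟩
        simp only [zero_sub, norm_neg, hQ q' hq', le_refl]
    _ ≤ ‖x - q‖ := hrq
    _ ≤ sSup ((fun q => ‖x - q‖) '' Q) :=
        le_csSup (Q.finite_toSet.image _).bddAbove (Set.mem_image_of_mem _ hq)

/-- If `0` lies in the open simplex spanned by a finite set `Q` of points at common distance
`r` from the origin, then for every `x` some point of `Q` is at distance at least `r` from
`x`; consequently `x ↦ max_{q ∈ Q} ‖x − q‖` attains its minimum at `x = 0`. -/
theorem center_in_open_simplex_min {d : ℕ} (Q : Finset (EuclideanSpace ℝ (Fin d)))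
    (r : ℝ) (hr : 0 < r) (hQ : ∀ q ∈ Q, ‖q‖ = r)
    (lam : EuclideanSpace ℝ (Fin d) → ℝ)
    (hpos : ∀ q ∈ Q, 0 < lam q) (hsum : ∑ q ∈ Q, lam q = 1)
    (hcomb : ∑ q ∈ Q, lam q • q = (0 : EuclideanSpace ℝ (Fin d))) :
    (∀ x : EuclideanSpace ℝ (Fin d), ∃ q ∈ Q, r ≤ ‖x - q‖) ∧
    (∀ x : EuclideanSpace ℝ (Fin d),
      sSup ((fun q => ‖(0 : EuclideanSpace ℝ (Fin d)) - q‖) '' Q) ≤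
        sSup ((fun q => ‖x - q‖) '' Q)) :=
  center_in_open_simplex_min_general Q r hQ lam hpos hsum hcomb
end

section
/- With the notation of the previous stability lemma, for all z in the open ball of radius ρ around c one has d_P^{(k)}(z) = d_{P_c}^{(k)}(z), where P_c = P ∩ B_{r_c}(c) is the set of points of P within closed distance r_c of c. -/
open Metric Classical
noncomputable section

/-- The `k`-th nearest neighbor distance function. -/
noncomputable def kNNdist {d : ℕ} (k : ℕ) (P : Finset (EuclideanSpace ℝ (Fin d)))
    (x : EuclideanSpace ℝ (Fin d)) : ℝ :=
  sInf {r : ℝ | 0 ≤ r ∧ k ≤ (P.filter (fun p => dist x p ≤ r)).card}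

/-- On a small ball around `c`, the `k`-NN distance to `P` agrees with the `k`-NN distance
to `P_c = P ∩ B̄_{r_c}(c)`. -/
theorem kNN_locally_determined {d k : ℕ} (hk : 1 ≤ k)
    (P : Finset (EuclideanSpace ℝ (Fin d))) (hP : k ≤ P.card)
    (c : EuclideanSpace ℝ (Fin d)) (rc rin rout : ℝ)
    (hrc : rc = kNNdist k P c)
    (hrin0 : 0 ≤ rin) (hrin : rin < rc) (hrout : rc < rout)
    (h_in : ∀ p ∈ P, dist c p < rc → dist c p ≤ rin)
    (h_out : ∀ p ∈ P, rc < dist c p → rout ≤ dist c p) :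
    ∀ z : EuclideanSpace ℝ (Fin d),
      dist z c < min ((rc - rin) / 2) ((rout - rc) / 2) →
        kNNdist k P z = kNNdist k (P.filter (fun p => dist c p ≤ rc)) z := by
  intro z hz
  set Pc := P.filter (fun p => dist c p ≤ rc) with hPcdef
  have hPne : P.Nonempty := Finset.card_pos.mp (lt_of_lt_of_le hk hP)
  -- the defining set at c is nonempty and bounded below
  have hSne : {r : ℝ | 0 ≤ r ∧ k ≤ (P.filter (fun p => dist c p ≤ r)).card}.Nonempty := by
    refine ⟨P.sup' hPne (fun p => dist c p), ?_, ?_⟩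
    · exact le_trans dist_nonneg (Finset.le_sup' _ hPne.choose_spec)
    · have : P.filter (fun p => dist c p ≤ P.sup' hPne (fun p => dist c p)) = P := by
        apply Finset.filter_true_of_mem
        intro p hp
        exact Finset.le_sup' _ hp
      rw [this]; exact hP
  have hSbd : BddBelow {r : ℝ | 0 ≤ r ∧ k ≤ (P.filter (fun p => dist c p ≤ r)).card} :=
    ⟨0, fun r hr => hr.1⟩
  -- the infimum is attained: k ≤ Pc.card
  have hattain : k ≤ Pc.card := by
    by_contra hco
    push_neg at hco
    have hlb : ∀ r ∈ {r : ℝ | 0 ≤ r ∧ k ≤ (P.filter (fun p => dist c p ≤ r)).card},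
        rout ≤ r := by
      rintro r ⟨hr0, hrk⟩
      by_contra hlt
      push_neg at hlt
      have hsub : P.filter (fun p => dist c p ≤ r) ⊆ Pc := by
        intro p hp
        rw [Finset.mem_filter] at hp ⊢
        refine ⟨hp.1, ?_⟩
        by_contra hcp
        push_neg at hcp
        have := h_out p hp.1 hcp
        linarith [hp.2]
      have := Finset.card_le_card hsub
      omega
    have : rout ≤ rc := by
      rw [hrc]
      exact le_csInf hSne hlb
    linarith
  have hz2 : dist z c < (rout - rc) / 2 := lt_of_lt_of_le hz (min_le_right _ _)
  have hin : ∀ p ∈ Pc, dist z p < (rc + rout) / 2 := by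
    intro p hp
    rw [hPcdef, Finset.mem_filter] at hp
    have := dist_triangle z c p
    linarith [hp.2]
  have hout : ∀ p ∈ P, ¬ dist c p ≤ rc → (rc + rout) / 2 < dist z p := by
    intro p hp hcp
    push_neg at hcp
    have h1 := h_out p hp hcp
    have h2 := dist_triangle c z p
    rw [dist_comm c z] at h2
    linarith
  unfold kNNdist
  congr 1
  ext r
  simp only [Set.mem_setOf_eq]
  constructor
  · rintro ⟨hr0, hrk⟩
    refine ⟨hr0, ?_⟩
    by_cases hrm : r < (rc + rout) / 2
    · refine le_trans hrk (Finset.card_le_card ?_)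
      intro p hp
      rw [Finset.mem_filter] at hp
      rw [hPcdef, Finset.filter_filter, Finset.mem_filter]
      refine ⟨hp.1, ?_, hp.2⟩
      by_contra hcp
      exact absurd hp.2 (not_le.mpr (lt_trans hrm (hout p hp.1 hcp)))
    · push_neg at hrm
      refine le_trans hattain (Finset.card_le_card ?_)
      intro p hp
      rw [Finset.mem_filter]
      exact ⟨hp, le_of_lt (lt_of_lt_of_le (hin p hp) hrm)⟩
  · rintro ⟨hr0, hrk⟩
    refine ⟨hr0, le_trans hrk (Finset.card_le_card ?_)⟩
    intro p hp
    rw [hPcdef, Finset.filter_filter, Finset.mem_filter] at hp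
    rw [Finset.mem_filter]
    exact ⟨hp.1, hp.2.2⟩
end
end

section
/- Let c be a point with c ∈ σ(Q) (the open simplex spanned by Q), where Q = P ∩ ∂B_{r_c}(c) with r_c = d_P^{(k)}(c), and suppose |P ∩ B_{r_c}(c)| = k (equivalently the index N_c − k equals 0). Then c is a strict local minimum of d_P^{(k)}: there is a neighborhood U of c such that d_P^{(k)}(x) ≥ d_P^{(k)}(c) for all x ∈ U. -/
/-!
Moving from `c` to a nearby `x`, the displacement `x - c` makes an angle of at least `π/2` with
`q - c` for some `q ∈ Q`, because `c` is a strictly positive convex combination of `Q`; then `q` is at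
least `r_c` away from `x`. Points of `P` outside the closed ball `B̄_{r_c}(c)` stay farther than
`r_c` from `x` when `x` is close to `c`. So every ball around `x` of radius `< r_c` contains at
most the `k - 1` points of `B̄_{r_c}(c) ∩ P` other than `q`, whence `d_P^{(k)}(x) ≥ r_c`.
-/

open Metric Classical
noncomputable section

open Finset Filter Topology

section InnerProductSpace

variable {E : Type*} [NormedAddCommGroup E] [InnerProductSpace ℝ E]

theorem exists_inner_sub_nonpos_of_sum_smul_eq {s : Finset E} {c : E} {w : E → ℝ}
    (hw : ∀ q ∈ s, 0 < w q) (hsum : ∑ q ∈ s, w q = 1) (hcomb : ∑ q ∈ s, w q • q = c) (v : E) :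
    ∃ q ∈ s, inner ℝ v (q - c) ≤ 0 := by
  by_contra! hneg
  have hs : s.Nonempty := nonempty_of_sum_ne_zero (by rw [hsum]; exact one_ne_zero)
  have hzero : ∑ q ∈ s, w q • (q - c) = 0 := by
    simp only [smul_sub, sum_sub_distrib, ← sum_smul, hsum, hcomb, one_smul, sub_self]
  have : ∑ q ∈ s, w q * inner ℝ v (q - c) = 0 := by
    simpa only [inner_sum, real_inner_smul_right, hzero, inner_zero_right] using
      (inner_sum (𝕜 := ℝ) s (fun q => w q • (q - c)) v).symm
  exact (sum_pos (fun q hq => mul_pos (hw q hq) (hneg q hq)) hs).ne' this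

theorem dist_le_dist_of_inner_sub_nonpos {x c q : E} (h : inner ℝ (x - c) (q - c) ≤ 0) :
    dist c q ≤ dist x q := by
  have hexp := norm_sub_sq_real (x - c) (q - c)
  rw [sub_sub_sub_cancel_right] at hexp
  rw [dist_comm c q, dist_eq_norm, dist_eq_norm]
  nlinarith [norm_nonneg (x - q), norm_nonneg (q - c), sq_nonneg ‖x - c‖]

end InnerProductSpace

section kNNdist

variable {d k : ℕ} {P : Finset (EuclideanSpace ℝ (Fin d))} {x : EuclideanSpace ℝ (Fin d)}

theorem le_kNNdist (hP : k ≤ #P) {r : ℝ}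
    (h : ∀ s < r, #(P.filter fun p => dist x p ≤ s) < k) : r ≤ kNNdist k P x := by
  have hne : {r : ℝ | 0 ≤ r ∧ k ≤ #(P.filter fun p => dist x p ≤ r)}.Nonempty := by
    refine ⟨∑ p ∈ P, dist x p, sum_nonneg fun _ _ => dist_nonneg, ?_⟩
    have hall : ∀ p ∈ P, dist x p ≤ ∑ q ∈ P, dist x q := fun p hp =>
      single_le_sum (f := fun q => dist x q) (fun _ _ => dist_nonneg) hp
    rwa [filter_true_of_mem hall]
  refine le_csInf hne fun s ⟨_, hs⟩ => ?_
  by_contra! hsr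
  exact (h s hsr).not_ge hs

end kNNdist

theorem index_zero_critical_point_is_local_min_general {d k : ℕ}
    (P : Finset (EuclideanSpace ℝ (Fin d)))
    (c : EuclideanSpace ℝ (Fin d)) (rc : ℝ) (hrc : rc = kNNdist k P c)
    (Q : Finset (EuclideanSpace ℝ (Fin d)))
    (hQ : Q = P.filter (fun p => dist c p = rc))
    (lam : EuclideanSpace ℝ (Fin d) → ℝ)
    (hpos : ∀ q ∈ Q, 0 < lam q) (hsum : ∑ q ∈ Q, lam q = 1)
    (hcomb : ∑ q ∈ Q, lam q • q = c)
    (hNc : (P.filter (fun p => dist c p ≤ rc)).card = k) :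
    ∃ U ∈ nhds c, ∀ x ∈ U, kNNdist k P c ≤ kNNdist k P x := by
  have hfar : ∀ᶠ x in 𝓝 c, ∀ p ∈ P.filter fun p => rc < dist c p, rc < dist x p :=
    (eventually_all_finset _).2 fun p hp =>
      (continuous_id.dist continuous_const).continuousAt.eventually_const_lt (mem_filter.1 hp).2
  refine ⟨_, hfar, fun x hx => ?_⟩
  obtain ⟨q, hqQ, hq⟩ := exists_inner_sub_nonpos_of_sum_smul_eq hpos hsum hcomb (x - c)
  rw [hQ, mem_filter] at hqQ
  have hxq : rc ≤ dist x q := hqQ.2 ▸ dist_le_dist_of_inner_sub_nonpos hq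
  have hq_ball : q ∈ P.filter fun p => dist c p ≤ rc := mem_filter.2 ⟨hqQ.1, hqQ.2.le⟩
  rw [← hrc]
  refine le_kNNdist (hNc ▸ card_filter_le _ _) fun s hs => ?_
  have hsub : (P.filter fun p => dist x p ≤ s) ⊆ (P.filter fun p => dist c p ≤ rc).erase q := by
    intro p hp
    rw [mem_filter] at hp
    refine mem_erase.2 ⟨?_, mem_filter.2 ⟨hp.1, ?_⟩⟩
    · rintro rfl
      linarith [hp.2]
    · by_contra! hout
      linarith [hx p (mem_filter.2 ⟨hp.1, hout⟩), hp.2]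
  exact hNc ▸ (card_le_card hsub).trans_lt (card_erase_lt_of_mem hq_ball)

/-- If `c` lies in the open simplex spanned by `Q = P ∩ ∂B_{r_c}(c)` (a strictly positive
convex combination of the points of `Q`) and the closed ball `B̄_{r_c}(c)` contains exactly
`k` points of `P` (index `0`), then `c` is a local minimum of `d_P^{(k)}`. -/
theorem index_zero_critical_point_is_local_min {d k : ℕ} (hk : 1 ≤ k)
    (P : Finset (EuclideanSpace ℝ (Fin d))) (hP : k ≤ P.card)
    (c : EuclideanSpace ℝ (Fin d)) (rc : ℝ) (hrc : rc = kNNdist k P c)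
    (Q : Finset (EuclideanSpace ℝ (Fin d)))
    (hQ : Q = P.filter (fun p => dist c p = rc))
    (lam : EuclideanSpace ℝ (Fin d) → ℝ)
    (hpos : ∀ q ∈ Q, 0 < lam q) (hsum : ∑ q ∈ Q, lam q = 1)
    (hcomb : ∑ q ∈ Q, lam q • q = c)
    (hNc : (P.filter (fun p => dist c p ≤ rc)).card = k) :
    ∃ U ∈ nhds c, ∀ x ∈ U, kNNdist k P c ≤ kNNdist k P x :=
  index_zero_critical_point_is_local_min_general P c rc hrc Q hQ lam hpos hsum hcomb hNc
end
end
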